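/- arXiv:1203.4255 — 2 statements merged into one kernel-verified Lean document; each statement's English description precedes it below -/
import Mathlib

section
/- For every natural number n, ∫_{−2√2}^{2√2} λⁿ w(λ) dλ = ⟨δ_O, H₀ⁿ δ_O⟩; that is, the measure w(λ)dλ on [−2√2, 2√2] is the spectral measure of the free tree Laplacian H₀ at the vector δ_O, so in the free case the spectral measure at the root is purely absolutely continuous with density w on [−2√2, 2√2]. -/
/-- `ℓ²` of the vertex set of the rooted Cayley tree with branching number 2:
vertices are finite binary strings; the root is the empty string. -/
noncomputable abbrev TreeL2 : Type := lp (fun _ : List Bool => ℂ) 2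

/-- The indicator (delta) function of the root `O = []`. -/
noncomputable def deltaO : TreeL2 := lp.single 2 ([] : List Bool) 1

/-- The density `w(λ) = (4π)⁻¹ √(8 - λ²)`. -/
noncomputable def w (lam : ℝ) : ℝ := (4 * Real.pi)⁻¹ * Real.sqrt (8 - lam ^ 2)


noncomputable def P : ℕ → ℝ → ℝ
  | 0, _ => 1
  | 1, x => x / 2
  | (d+2), x => (x * P (d+1) x - P d x) / 2

lemma P_cont : ∀ d : ℕ, Continuous (P d)
  | 0 => by simpa [P] using continuous_const
  | 1 => by simpa [P] using continuous_id.div_const 2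
  | (d+2) => by
      have h1 := P_cont (d+1); have h0 := P_cont d
      simpa [P] using ((continuous_id.mul h1).sub h0).div_const 2

lemma mul_P (d : ℕ) (x : ℝ) :
    x * P d x = 2 * P (d+1) x + (if d = 0 then 0 else P (d-1) x) := by
  cases d with
  | zero => simp [P]; ring
  | succ d => simp [P]; ring

lemma P_sin : ∀ (d : ℕ) (θ : ℝ),
    Real.sqrt 2 ^ d * (P d (2 * Real.sqrt 2 * Real.cos θ) * Real.sin θ)
      = Real.sin (((d : ℝ) + 1) * θ)
  | 0, θ => by simp [P]
  | 1, θ => by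
      have h2 : Real.sqrt 2 * Real.sqrt 2 = 2 := Real.mul_self_sqrt (by norm_num)
      have e : ((1:ℕ) : ℝ) + 1 = 2 := by norm_num
      rw [e, show (2:ℝ) * θ = θ + θ by ring, Real.sin_add]
      simp only [P, pow_one]
      linear_combination (Real.cos θ * Real.sin θ) * h2
  | (d+2), θ => by
      have ih1 := P_sin (d+1) θ
      have ih0 := P_sin d θ
      have hp : Real.sqrt 2 ^ (d+2) = 2 * Real.sqrt 2 ^ d := by
        rw [pow_succ, pow_succ, mul_assoc, Real.mul_self_sqrt (by norm_num : (0:ℝ) ≤ 2)]; ring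
      have hp1 : Real.sqrt 2 ^ (d+1) = Real.sqrt 2 ^ d * Real.sqrt 2 := pow_succ _ _
      rw [show (((d+1 : ℕ) : ℝ) + 1) * θ = (((d:ℝ)+2)) * θ by push_cast; ring, hp1] at ih1
      rw [show (((d : ℕ) : ℝ) + 1) * θ = (((d:ℝ)+2)) * θ - θ by ring, Real.sin_sub] at ih0
      rw [show (((d+2 : ℕ) : ℝ) + 1) * θ = (((d:ℝ)+2)) * θ + θ by push_cast; ring, Real.sin_add, hp]
      simp only [P]
      linear_combination (2 * Real.cos θ) * ih1 - ih0
lemma w_cont : Continuous w :=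
  continuous_const.mul (Real.continuous_sqrt.comp (by continuity))

lemma int_cos_zero (k : ℕ) (hk : (k:ℝ) ≠ 0) :
    ∫ θ in (0:ℝ)..Real.pi, Real.cos ((k:ℝ) * θ) = 0 := by
  rw [intervalIntegral.integral_comp_mul_left Real.cos hk]
  simp [integral_cos, Real.sin_nat_mul_pi]

lemma sin_mul_sin_int (d : ℕ) :
    ∫ θ in (0:ℝ)..Real.pi, Real.sin (((d:ℝ)+1) * θ) * Real.sin θ
      = if d = 0 then Real.pi / 2 else 0 := by
  rcases d with _ | e
  · rw [if_pos rfl]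
    rw [intervalIntegral.integral_congr
      (g := fun θ => Real.sin θ ^ 2) (fun θ _ => by norm_num; ring)]
    simp [integral_sin_sq]
  · rw [if_neg (by simp)]
    have hcongr : Set.EqOn (fun θ => Real.sin ((((e+1:ℕ):ℝ)+1) * θ) * Real.sin θ)
        (fun θ => (Real.cos (((e+1:ℕ):ℝ) * θ) - Real.cos (((e+3:ℕ):ℝ) * θ)) / 2)
        (Set.uIcc 0 Real.pi) := by
      intro θ _
      have e1 : (((e+1:ℕ):ℝ)) * θ = ((((e+1:ℕ):ℝ))+1) * θ - θ := by push_cast; ring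
      have e2 : (((e+3:ℕ):ℝ)) * θ = ((((e+1:ℕ):ℝ))+1) * θ + θ := by push_cast; ring
      simp only [e1, e2, Real.cos_sub, Real.cos_add]
      ring
    rw [intervalIntegral.integral_congr hcongr, intervalIntegral.integral_div,
      intervalIntegral.integral_sub
        ((by continuity : Continuous fun x:ℝ => Real.cos (((e+1:ℕ):ℝ) * x)).intervalIntegrable _ _)
        ((by continuity : Continuous fun x:ℝ => Real.cos (((e+3:ℕ):ℝ) * x)).intervalIntegrable _ _),
      int_cos_zero (e+1) (by positivity), int_cos_zero (e+3) (by positivity)]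
    norm_num

lemma integral_P_w (d : ℕ) :
    (∫ x in Set.Icc (-(2*Real.sqrt 2)) (2*Real.sqrt 2), P d x * w x)
      = if d = 0 then 1 else 0 := by
  have s2 : Real.sqrt 2 * Real.sqrt 2 = 2 := Real.mul_self_sqrt (by norm_num)
  have s2pos : 0 < Real.sqrt 2 := Real.sqrt_pos.2 (by norm_num)
  have hle : -(2*Real.sqrt 2) ≤ 2*Real.sqrt 2 := by nlinarith
  rw [MeasureTheory.integral_Icc_eq_integral_Ioc, ← intervalIntegral.integral_of_le hle]
  have hderiv : ∀ θ ∈ Set.uIcc (0:ℝ) Real.pi,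
      HasDerivAt (fun t => 2*Real.sqrt 2 * Real.cos t) (-(2*Real.sqrt 2 * Real.sin θ)) θ := by
    intro θ _
    simpa [mul_comm, mul_assoc, mul_neg] using (Real.hasDerivAt_cos θ).const_mul (2*Real.sqrt 2)
  have hcont' : ContinuousOn (fun θ => -(2*Real.sqrt 2 * Real.sin θ)) (Set.uIcc 0 Real.pi) :=
    (continuous_const.mul Real.continuous_sin).neg.continuousOn
  have hg : Continuous (fun x => P d x * w x) := (P_cont d).mul w_cont
  have hsub := intervalIntegral.integral_comp_smul_deriv hderiv hcont' hg
  simp only [Real.cos_zero, Real.cos_pi, mul_one, mul_neg_one] at hsub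
  rw [intervalIntegral.integral_symm, ← hsub, ← intervalIntegral.integral_neg]
  have hnd : Real.sqrt 2 ^ d ≠ 0 := by positivity
  have hkey : Set.EqOn
      (fun θ => -((-(2*Real.sqrt 2 * Real.sin θ)) • ((fun x => P d x * w x) ∘
         (fun t => 2*Real.sqrt 2 * Real.cos t)) θ))
      (fun θ => (2/Real.pi * (Real.sqrt 2 ^ d)⁻¹) * (Real.sin (((d:ℝ)+1) * θ) * Real.sin θ))
      (Set.uIcc 0 Real.pi) := by
    intro θ hθ
    rw [Set.uIcc_of_le Real.pi_pos.le] at hθ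
    have hsin : 0 ≤ Real.sin θ := Real.sin_nonneg_of_nonneg_of_le_pi hθ.1 hθ.2
    simp only [Function.comp, smul_eq_mul, neg_neg, neg_mul]
    have hw : w (2*Real.sqrt 2*Real.cos θ) = (4*Real.pi)⁻¹ * (2*Real.sqrt 2*Real.sin θ) := by
      rw [w]
      congr 1
      rw [show 8 - (2*Real.sqrt 2*Real.cos θ)^2 = (2*Real.sqrt 2*Real.sin θ)^2 by
        nlinarith [Real.sin_sq_add_cos_sq θ]]
      exact Real.sqrt_sq (by positivity)
    have hP := P_sin d θ
    rw [hw]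
    have hπ : Real.pi ≠ 0 := Real.pi_ne_zero
    rw [← hP]
    field_simp
    linear_combination (2 * Real.sin θ ^ 2 *
      P d (2 * Real.sqrt 2 * Real.cos θ)) * s2
  rw [intervalIntegral.integral_congr hkey, intervalIntegral.integral_const_mul,
    sin_mul_sin_int]
  rcases d with _ | e
  · rw [if_pos rfl, if_pos rfl]
    field_simp
  · simp

/-- Radial coefficients of `H₀ ^ n δ_O`. -/
noncomputable def aSeq : ℕ → ℕ → ℝ
  | 0, d => if d = 0 then 1 else 0
  | (n+1), d => 2 * aSeq n (d+1) + (if d = 0 then 0 else aSeq n (d-1))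

lemma integrable_aux (f : ℝ → ℝ) (hf : Continuous f) :
    MeasureTheory.IntegrableOn f (Set.Icc (-(2*Real.sqrt 2)) (2*Real.sqrt 2)) :=
  hf.integrableOn_Icc

lemma moment_eq_aSeq : ∀ (n d : ℕ),
    (∫ x in Set.Icc (-(2*Real.sqrt 2)) (2*Real.sqrt 2), x ^ n * P d x * w x) = aSeq n d := by
  intro n
  induction n with
  | zero =>
    intro d
    simpa [aSeq] using integral_P_w d
  | succ n ih =>
    intro d
    have hint : ∀ e : ℕ, MeasureTheory.IntegrableOn
        (fun x => x ^ n * P e x * w x)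
        (Set.Icc (-(2*Real.sqrt 2)) (2*Real.sqrt 2)) :=
      fun e => integrable_aux _ (((continuous_pow n).mul (P_cont e)).mul w_cont)
    rcases Nat.eq_zero_or_pos d with rfl | hd
    · have hfe : (fun x : ℝ => x ^ (n+1) * P 0 x * w x)
          = fun x => 2 * (x ^ n * P 1 x * w x) := by
        funext x
        have := mul_P 0 x
        norm_num at this
        linear_combination (x ^ n * w x) * this
      rw [hfe, MeasureTheory.integral_const_mul, ih 1]
      simp [aSeq]
    · obtain ⟨e, rfl⟩ := Nat.exists_eq_add_of_lt hd
      simp only [zero_add] at *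
      have hfe : (fun x : ℝ => x ^ (n+1) * P (e+1) x * w x)
          = fun x => 2 * (x ^ n * P (e+2) x * w x) + x ^ n * P e x * w x := by
        funext x
        have := mul_P (e+1) x
        simp only [Nat.add_sub_cancel, if_neg (Nat.succ_ne_zero e)] at this
        linear_combination (x ^ n * w x) * this
      rw [hfe, MeasureTheory.integral_add ((hint (e+2)).const_mul 2) (hint e),
        MeasureTheory.integral_const_mul, ih (e+2), ih e]
      simp [aSeq]

/-- For every `n`, `∫_{-2√2}^{2√2} λⁿ w(λ) dλ = ⟨δ_O, H₀ⁿ δ_O⟩`: the measure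
`w(λ)dλ` on `[-2√2, 2√2]` is the spectral measure of the free tree Laplacian `H₀`
at the vector `δ_O`. -/
theorem spectral_measure_free_tree_laplacian_at_root
    (H₀ : TreeL2 →L[ℂ] TreeL2)
    (hH₀ : ∀ (f : TreeL2) (s : List Bool),
      H₀ f s = f (s ++ [false]) + f (s ++ [true]) +
        (if s = [] then 0 else f s.dropLast)) :
    ∀ n : ℕ,
      ((∫ lam in Set.Icc (-(2 * Real.sqrt 2)) (2 * Real.sqrt 2),
          lam ^ n * w lam : ℝ) : ℂ) =
        inner ℂ deltaO ((H₀ ^ n) deltaO) := by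
  have key : ∀ (n : ℕ) (s : List Bool),
      ((H₀ ^ n) deltaO) s = ((aSeq n s.length : ℝ) : ℂ) := by
    intro n
    induction n with
    | zero =>
      intro s
      rw [pow_zero, ContinuousLinearMap.one_apply]
      rcases eq_or_ne s [] with rfl | hs
      · simp [deltaO, lp.single_apply_self, aSeq]
      · have hlen : s.length ≠ 0 := fun h => hs (List.length_eq_zero_iff.mp h)
        rw [deltaO, lp.single_apply_ne 2 _ _ hs]
        simp [aSeq, hlen]
    | succ n ih =>
      intro s
      rw [pow_succ', ContinuousLinearMap.mul_apply, hH₀, ih, ih, ih]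
      rcases s with _ | ⟨b, t⟩
      · simp only [List.nil_append, List.length_cons, List.length_nil, if_pos rfl]
        push_cast [aSeq]
        ring
      · have hne : (b :: t) ≠ [] := by simp
        simp only [if_neg hne, List.length_append, List.length_cons,
          List.length_dropLast, List.length_singleton]
        push_cast [aSeq]
        norm_num
        ring
  intro n
  have hinner : (inner ℂ deltaO ((H₀ ^ n) deltaO) : ℂ) = ((H₀ ^ n) deltaO) [] := by
    rw [deltaO, lp.inner_single_left]
    simp [RCLike.inner_apply]
  have hmom : (∫ lam in Set.Icc (-(2 * Real.sqrt 2)) (2 * Real.sqrt 2),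
      lam ^ n * w lam : ℝ) = aSeq n 0 := by
    have hfe : (fun x : ℝ => x ^ n * P 0 x * w x) = fun x => x ^ n * w x := by
      funext x; simp [P]
    rw [← moment_eq_aSeq n 0, hfe]
  rw [hinner, key n [], hmom]
  simp
end

section
/- For every natural number n, ⟨δ_O, H₀^{2n} δ_O⟩ = 2ⁿ · Cₙ, where Cₙ = (n+1)⁻¹ · binom(2n, n) is the n-th Catalan number (this counts the closed walks of length 2n at the root of the tree), and ⟨δ_O, H₀^{2n+1} δ_O⟩ = 0 for every n. -/
/-- `C(k,u) - C(k,u-1)`, with the convention that the second term is `0` when `u = 0`. -/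
def treeG (k u : ℕ) : ℤ :=
  (k.choose u : ℤ) - if u = 0 then 0 else (k.choose (u - 1) : ℤ)

/-- The (weighted) number of walks of length `k` from depth `m` to the root. -/
def treeF (k m : ℕ) : ℤ :=
  if m ≤ k ∧ (k - m) % 2 = 0 then 2 ^ ((k - m) / 2) * treeG k ((k - m) / 2) else 0

lemma treeF_of (m u : ℕ) : treeF (m + 2 * u) m = 2 ^ u * treeG (m + 2 * u) u := by
  have h1 : m + 2 * u - m = 2 * u := by omega
  simp [treeF, h1, Nat.mul_div_cancel_left, Nat.mul_mod_right]

lemma treeF_odd' (m u : ℕ) : treeF (m + 2 * u + 1) m = 0 := by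
  have h1 : m + 2 * u + 1 - m = 2 * u + 1 := by omega
  simp [treeF, h1, Nat.add_mul_mod_self_left]

lemma treeF_lt {k m : ℕ} (h : k < m) : treeF k m = 0 := by
  simp [treeF]; omega

lemma treeG_pascal (k v : ℕ) : treeG (k + 1) (v + 1) = treeG k v + treeG k (v + 1) := by
  rcases v with _ | w
  · simp [treeG, Nat.choose_succ_succ]
  · simp only [treeG, Nat.choose_succ_succ, Nat.succ_ne_zero, if_neg, Nat.add_sub_cancel,
      reduceIte]
    push_cast
    ring

lemma treeG_zero (k : ℕ) : treeG k 0 = 1 := by simp [treeG]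

lemma treeF_zero (m : ℕ) : treeF 0 m = if m = 0 then 1 else 0 := by
  rcases Nat.eq_zero_or_pos m with h | h
  · subst h
    simpa [treeG_zero] using treeF_of 0 0
  · rw [treeF_lt h, if_neg (by omega)]

lemma treeF_step (k m : ℕ) : treeF (k + 1) (m + 1) = 2 * treeF k (m + 2) + treeF k m := by
  rcases Nat.lt_or_ge k m with h | h
  · rw [treeF_lt (by omega), treeF_lt (by omega), treeF_lt (by omega)]; ring
  · obtain ⟨d, rfl⟩ := Nat.exists_eq_add_of_le h
    rcases Nat.even_or_odd d with ⟨u, hu⟩ | ⟨u, hu⟩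
    · subst hu
      have e1 : m + (u + u) = m + 2 * u := by ring
      have e2 : m + (u + u) + 1 = (m + 1) + 2 * u := by ring
      rw [e2, treeF_of (m + 1) u, e1, treeF_of m u]
      rcases u with _ | v
      · rw [treeF_lt (by omega)]
        simp [treeG_zero]
      · have e3 : m + 2 * (v + 1) = (m + 2) + 2 * v := by ring
        rw [e3, treeF_of (m + 2) v, ← e3]
        have := treeG_pascal (m + 2 * (v + 1)) v
        rw [show m + 2 * (v + 1) + 1 = m + 1 + 2 * (v + 1) from by ring] at this
        rw [this]
        ring
    · subst hu
      have e1 : m + (2 * u + 1) = m + 2 * u + 1 := by ring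
      have e2 : m + (2 * u + 1) + 1 = (m + 1) + 2 * (u + 1) - 1 := by omega
      rw [show m + (2 * u + 1) + 1 = (m + 1) + 2 * u + 1 from by ring, treeF_odd' (m + 1) u,
        e1, treeF_odd' m u]
      rcases u with _ | v
      · rw [treeF_lt (by omega)]; ring
      · rw [show m + 2 * (v + 1) + 1 = (m + 2) + 2 * v + 1 from by ring, treeF_odd' (m + 2) v]
        ring

lemma treeG_half (u : ℕ) : treeG (2 * u + 1) (u + 1) = 0 := by
  simp [treeG, Nat.choose_symm_half]

lemma treeF_root (k : ℕ) : treeF (k + 1) 0 = 2 * treeF k 1 := by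
  rcases Nat.even_or_odd k with ⟨u, hu⟩ | ⟨u, hu⟩
  · subst hu
    rw [show u + u + 1 = 0 + 2 * u + 1 from by ring, treeF_odd' 0 u]
    rcases u with _ | v
    · rw [treeF_lt (by omega)]; ring
    · rw [show v + 1 + (v + 1) = 1 + 2 * v + 1 from by ring, treeF_odd' 1 v]; ring
  · subst hu
    rw [show 2 * u + 1 + 1 = 0 + 2 * (u + 1) from by ring, treeF_of 0 (u + 1),
      show 2 * u + 1 = 1 + 2 * u from by ring, treeF_of 1 u]
    have hp : treeG (0 + 2 * (u + 1)) (u + 1)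
        = treeG (2 * u + 1) u + treeG (2 * u + 1) (u + 1) := by
      rw [show 0 + 2 * (u + 1) = (2 * u + 1) + 1 from by ring]
      exact treeG_pascal (2 * u + 1) u
    rw [hp, treeG_half, show 1 + 2 * u = 2 * u + 1 from by ring]
    ring

lemma treeG_catalan (n : ℕ) : treeG (2 * n) n = (catalan n : ℤ) := by
  rcases n with _ | v
  · simp [treeG]
  · set n := v + 1
    have hkey : (n : ℤ) * ((2 * n).choose n : ℤ) = ((n : ℤ) + 1) * ((2 * n).choose v : ℤ) := by
      have := Nat.choose_succ_right_eq (2 * n) v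
      have h2 : 2 * n - v = n + 1 := by omega
      rw [h2] at this
      have : ((2 * n).choose (v + 1) : ℤ) * (v + 1) = ((2 * n).choose v : ℤ) * (n + 1) := by
        exact_mod_cast congrArg (Nat.cast : ℕ → ℤ) this
      simp only [n] at this ⊢
      push_cast at this ⊢
      linarith [this]
    have hcb : ((n : ℤ) + 1) * (catalan n : ℤ) = ((2 * n).choose n : ℤ) := by
      have := succ_mul_catalan_eq_centralBinom n
      rw [Nat.centralBinom] at this
      exact_mod_cast congrArg (Nat.cast : ℕ → ℤ) this
    have hne : ((n : ℤ) + 1) ≠ 0 := by positivity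
    have hmul : ((n : ℤ) + 1) * treeG (2 * n) n = ((n : ℤ) + 1) * (catalan n : ℤ) := by
      rw [hcb]
      simp only [treeG, show n ≠ 0 from Nat.succ_ne_zero v, if_neg, reduceIte,
        show n - 1 = v from rfl]
      linarith [hkey]
    exact mul_left_cancel₀ hne hmul

lemma treeF_even_root (n : ℕ) : treeF (2 * n) 0 = 2 ^ n * (catalan n : ℤ) := by
  have := treeF_of 0 n
  rw [Nat.zero_add] at this
  rw [this, treeG_catalan]

lemma treeF_odd_root (n : ℕ) : treeF (2 * n + 1) 0 = 0 := by
  have := treeF_odd' 0 n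
  rwa [Nat.zero_add] at this

/-- The even moments of the free tree Laplacian at the root are
`⟨δ_O, H₀^{2n} δ_O⟩ = 2ⁿ · Cₙ` where `Cₙ` is the `n`-th Catalan number,
and the odd moments vanish. -/
theorem moments_free_tree_laplacian_at_root
    (H₀ : TreeL2 →L[ℂ] TreeL2)
    (hH₀ : ∀ (f : TreeL2) (s : List Bool),
      H₀ f s = f (s ++ [false]) + f (s ++ [true]) +
        (if s = [] then 0 else f s.dropLast)) :
    ∀ n : ℕ,
      (inner ℂ deltaO ((H₀ ^ (2 * n)) deltaO) : ℂ) = 2 ^ n * (catalan n : ℂ) ∧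
      (inner ℂ deltaO ((H₀ ^ (2 * n + 1)) deltaO) : ℂ) = 0 := by
  have key : ∀ (k : ℕ) (s : List Bool),
      ((H₀ ^ k) deltaO) s = ((treeF k s.length : ℤ) : ℂ) := by
    intro k
    induction k with
    | zero =>
      intro s
      rw [pow_zero, ContinuousLinearMap.one_apply, deltaO, lp.single_apply, treeF_zero]
      rcases eq_or_ne s [] with h | h
      · subst h; simp
      · rw [Pi.single_apply, if_neg h, if_neg (by simpa using h)]
        norm_num
    | succ k ih =>
      intro s
      rw [pow_succ', ContinuousLinearMap.mul_apply, hH₀, ih, ih]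
      rcases eq_or_ne s [] with h | h
      · subst h
        simp only [List.nil_append, List.length_cons, List.length_nil, reduceIte]
        rw [show (0 : ℕ) + 1 = 1 from rfl, treeF_root]
        push_cast
        ring
      · obtain ⟨m, hm⟩ : ∃ m, s.length = m + 1 := by
          cases s with
          | nil => exact absurd rfl h
          | cons a t => exact ⟨t.length, rfl⟩
        rw [if_neg h, ih]
        have hd : s.dropLast.length = m := by
          rw [List.length_dropLast, hm]; omega
        have hb : ∀ b : Bool, (s ++ [b]).length = m + 2 := by
          intro b; simp [hm]
        rw [hd, hb, hb, hm, treeF_step]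
        push_cast
        ring
  have inner_eval : ∀ v : TreeL2, (inner ℂ deltaO v : ℂ) = v [] := by
    intro v
    rw [deltaO, lp.inner_single_left]
    simp
  intro n
  constructor
  · rw [inner_eval, key, show ([] : List Bool).length = 0 from rfl, treeF_even_root]
    push_cast
    ring
  · rw [inner_eval, key, show ([] : List Bool).length = 0 from rfl, treeF_odd_root]
    norm_num
end
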